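/- The existential arbitrary arrow update quantifier commutes with diamond: ⟨↑⟩◇_a φ ↔ ◇_a⟨↑⟩φ is valid, where M,s ⊨ ⟨↑⟩φ iff there is an arrow update model (U,o) with modal-logic source and target conditions such that M,s ⊨ ⟨U,o⟩φ. -/

import Mathlib

namespace AAUML

/-- Formulas of arbitrary arrow update model logic over atoms `P` and agents `A`.
An arrow update model is encoded as a finite list of arrows
`(agent, source outcome, source condition, target outcome, target condition)`,
with outcomes drawn from `ℕ`; `upd U o φ` is `[U,o]φ` and `all φ` is `[↑]φ`. -/
inductive Form (P A : Type) : Type where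
  | atom : P → Form P A
  | neg  : Form P A → Form P A
  | and  : Form P A → Form P A → Form P A
  | box  : A → Form P A → Form P A
  | upd  : List (A × ℕ × Form P A × ℕ × Form P A) → ℕ → Form P A → Form P A
  | all  : Form P A → Form P A

/-- An arrow: agent, source outcome, source condition, target outcome, target condition. -/
abbrev Arrow (P A : Type) := A × ℕ × Form P A × ℕ × Form P A

/-- Formulas of basic multi-agent modal logic: no update modality, no quantifier. -/
inductive Form.Modal {P A : Type} : Form P A → Prop
  | atom (p : P) : Form.Modal (.atom p)
  | neg {φ : Form P A} : Form.Modal φ → Form.Modal (.neg φ)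
  | and {φ ψ : Form P A} : Form.Modal φ → Form.Modal ψ → Form.Modal (.and φ ψ)
  | box (a : A) {φ : Form P A} : Form.Modal φ → Form.Modal (.box a φ)

/-- Formulas of arrow update model logic (no arbitrary-update quantifier anywhere,
including inside the conditions of arrow update models). -/
inductive Form.NoQuant {P A : Type} : Form P A → Prop
  | atom (p : P) : Form.NoQuant (.atom p)
  | neg {φ : Form P A} : Form.NoQuant φ → Form.NoQuant (.neg φ)
  | and {φ ψ : Form P A} : Form.NoQuant φ → Form.NoQuant ψ → Form.NoQuant (.and φ ψ)
  | box (a : A) {φ : Form P A} : Form.NoQuant φ → Form.NoQuant (.box a φ)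
  | upd {U : List (Arrow P A)} (o : ℕ) {φ : Form P A} : Form.NoQuant φ →
      (∀ ar ∈ U, Form.NoQuant ar.2.2.1) → (∀ ar ∈ U, Form.NoQuant ar.2.2.2.2) →
      Form.NoQuant (.upd U o φ)

/-- Propositional formulas (no modalities at all). -/
inductive Form.Prp {P A : Type} : Form P A → Prop
  | atom (p : P) : Form.Prp (.atom p)
  | neg {φ : Form P A} : Form.Prp φ → Form.Prp (.neg φ)
  | and {φ ψ : Form P A} : Form.Prp φ → Form.Prp ψ → Form.Prp (.and φ ψ)

/-- A relational (Kripke) model. -/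
structure KModel (P A : Type) : Type 1 where
  World : Type
  R : A → World → World → Prop
  V : World → P → Prop

variable {P A : Type}

/-- Satisfaction for basic modal formulas (junk value `False` on updates/quantifiers;
only used on modal formulas). -/
def msat (M : KModel P A) : M.World → Form P A → Prop
  | s, .atom p => M.V s p
  | s, .neg φ => ¬ msat M s φ
  | s, .and φ ψ => msat M s φ ∧ msat M s ψ
  | s, .box a φ => ∀ t, M.R a s t → msat M t φ
  | _, .upd _ _ _ => False
  | _, .all _ => False

/-- Some arrow of `U` for agent `a` from outcome `o` to outcome `o'` has its (modal)
source condition true at `s` and its target condition true at `s'`. -/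
def marrowOK (M : KModel P A) (U : List (Arrow P A)) (a : A) (o o' : ℕ)
    (s s' : M.World) : Prop :=
  ∃ ψ ψ', (a, o, ψ, o', ψ') ∈ U ∧ msat M s ψ ∧ msat M s' ψ'

/-- All source and target conditions of `U` are basic modal formulas. -/
def ModalArrows (U : List (Arrow P A)) : Prop :=
  ∀ ar ∈ U, Form.Modal ar.2.2.1 ∧ Form.Modal ar.2.2.2.2

mutual
  /-- Satisfaction `M,s ⊨ φ`.  The case `upd U o φ` is interpreted in the product
  model `M*U` (inlined); `all φ` quantifies over all arrow update models with basic
  modal source and target conditions. -/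
  def Form.sat : (M : KModel P A) → M.World → Form P A → Prop
    | M, s, .atom p => M.V s p
    | M, s, .neg φ => ¬ Form.sat M s φ
    | M, s, .and φ ψ => Form.sat M s φ ∧ Form.sat M s ψ
    | M, s, .box a φ => ∀ t, M.R a s t → Form.sat M t φ
    | M, s, .upd U o φ =>
        Form.sat ⟨M.World × ℕ,
          fun a x y => M.R a x.1 y.1 ∧ satList M U a x.2 y.2 x.1 y.1,
          fun x p => M.V x.1 p⟩ (s, o) φ
    | M, s, .all φ => ∀ (U : List (Arrow P A)) (o : ℕ), ModalArrows U →
        Form.sat ⟨M.World × ℕ,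
          fun a x y => M.R a x.1 y.1 ∧ marrowOK M U a x.2 y.2 x.1 y.1,
          fun x p => M.V x.1 p⟩ (s, o) φ
  termination_by M s φ => sizeOf φ

  /-- Some arrow of the list, for agent `a`, from `o` to `o'`, has its source condition
  true at `s` and its target condition true at `s'`. -/
  def satList : (M : KModel P A) → List (Arrow P A) → A → ℕ → ℕ → M.World → M.World → Prop
    | _, [], _, _, _, _, _ => False
    | M, (b, o1, ψ, o2, ψ') :: rest, a, o, o', s, s' =>
        (b = a ∧ o1 = o ∧ o2 = o' ∧ Form.sat M s ψ ∧ Form.sat M s' ψ') ∨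
        satList M rest a o o' s s'
  termination_by M U a o o' s s' => sizeOf U
end

/-- The product `M*U` of a relational model and an arrow update model. -/
def prodModel (M : KModel P A) (U : List (Arrow P A)) : KModel P A :=
  ⟨M.World × ℕ,
   fun a x y => M.R a x.1 y.1 ∧ satList M U a x.2 y.2 x.1 y.1,
   fun x p => M.V x.1 p⟩

def Valid (φ : Form P A) : Prop := ∀ (M : KModel P A) (s : M.World), Form.sat M s φ

def Form.or (φ ψ : Form P A) : Form P A := .neg (.and (.neg φ) (.neg ψ))
def Form.imp (φ ψ : Form P A) : Form P A := .neg (.and φ (.neg ψ))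
def Form.dia (a : A) (φ : Form P A) : Form P A := .neg (.box a (.neg φ))
/-- `⟨U,o⟩φ` -/
def Form.diaUpd (U : List (Arrow P A)) (o : ℕ) (φ : Form P A) : Form P A :=
  .neg (.upd U o (.neg φ))
/-- `⟨↑⟩φ` -/
def Form.ex (φ : Form P A) : Form P A := .neg (.all (.neg φ))
/-- A canonical tautology. -/
def Form.top [Inhabited P] : Form P A := .neg (.and (.atom default) (.neg (.atom default)))
/-- Finite conjunction. -/
def Form.conj [Inhabited P] : List (Form P A) → Form P A
  | [] => Form.top
  | φ :: rest => .and φ (Form.conj rest)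

/-- `Z` is a bisimulation between `M` and `N`. -/
def IsBisim (M N : KModel P A) (Z : M.World → N.World → Prop) : Prop :=
  ∀ s s', Z s s' →
    (∀ p, M.V s p ↔ N.V s' p) ∧
    (∀ a t, M.R a s t → ∃ t', N.R a s' t' ∧ Z t t') ∧
    (∀ a t', N.R a s' t' → ∃ t, M.R a s t ∧ Z t t')

/-- Bisimilarity of pointed models. -/
def Bisimilar (M : KModel P A) (s : M.World) (N : KModel P A) (s' : N.World) : Prop :=
  ∃ Z, IsBisim M N Z ∧ Z s s'

/-- An action model: actions with accessibility relations and preconditions. -/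
structure AModel (P A : Type) : Type 1 where
  Action : Type
  rel : A → Action → Action → Prop
  pre : Action → Form P A

/-- The restricted modal product `M ⊗ E`. -/
def actProd (M : KModel P A) (E : AModel P A) : KModel P A :=
  ⟨{x : M.World × E.Action // Form.sat M x.1 (E.pre x.2)},
   fun a x y => M.R a x.1.1 y.1.1 ∧ E.rel a x.1.2 y.1.2,
   fun x p => M.V x.1.1 p⟩

/-- `M,s ⊨ [E,e]φ`: if the precondition of `e` holds at `s` then `φ` holds at `(s,e)`
in `M ⊗ E`. -/
def actSat (M : KModel P A) (E : AModel P A) (s : M.World) (e : E.Action)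
    (φ : Form P A) : Prop :=
  ∀ h : Form.sat M s (E.pre e), Form.sat (actProd M E) ⟨(s, e), h⟩ φ

/-! Left to right, an `a`-successor `(t, o₁)` of `(s, o)` in `M*U` is itself a witness
`⟨U, o₁⟩φ` at `t`. Right to left, given `⟨U, o⟩φ` at an `a`-successor `t` of `s`, add a fresh
outcome `o'` with the single arrow `(o', ⊤) →_a (o, ⊤)`; then `(s, o')` sees `(t, o)`. No arrow
enters `o'`, so away from `o'` the enlarged product is bisimilar to `M*U` via the identity, and
truth of all formulas, updates and quantifiers included, is invariant under bisimulation because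
each product construction maps a bisimulation `Z` to the bisimulation `Z × (=)`. -/

/-- `ok a o o' s s'` selects the surviving arrows `(s, o) →_a (s', o')`: with `satList M U`
this is `prodModel M U`, with `marrowOK M U` the product over which `all` quantifies. -/
abbrev KModel.arrowProd (M : KModel P A) (ok : A → ℕ → ℕ → M.World → M.World → Prop) :
    KModel P A :=
  ⟨M.World × ℕ, fun a x y => M.R a x.1 y.1 ∧ ok a x.2 y.2 x.1 y.1, fun x p => M.V x.1 p⟩

section Semantics

variable (M : KModel P A) (s : M.World)

lemma sat_neg (φ : Form P A) : Form.sat M s (.neg φ) ↔ ¬ Form.sat M s φ := by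
  rw [Form.sat]

lemma sat_box (a : A) (φ : Form P A) :
    Form.sat M s (.box a φ) ↔ ∀ t, M.R a s t → Form.sat M t φ := by
  rw [Form.sat]

lemma sat_upd (U : List (Arrow P A)) (o : ℕ) (φ : Form P A) :
    Form.sat M s (.upd U o φ) ↔ Form.sat (M.arrowProd (satList M U)) (s, o) φ := by
  rw [Form.sat]

lemma sat_all (φ : Form P A) :
    Form.sat M s (.all φ) ↔
      ∀ U o, ModalArrows U → Form.sat (M.arrowProd (marrowOK M U)) (s, o) φ := by
  rw [Form.sat]

lemma sat_dia (a : A) (φ : Form P A) :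
    Form.sat M s (Form.dia a φ) ↔ ∃ t, M.R a s t ∧ Form.sat M t φ := by
  simp only [Form.dia, sat_neg, sat_box, not_forall, not_not, exists_prop]

lemma sat_ex (φ : Form P A) :
    Form.sat M s (Form.ex φ) ↔
      ∃ U o, ModalArrows U ∧ Form.sat (M.arrowProd (marrowOK M U)) (s, o) φ := by
  simp only [Form.ex, sat_neg, sat_all, not_forall, not_not, exists_prop]

end Semantics

section Bisimulation

variable {M N : KModel P A} {Z : M.World → N.World → Prop}

lemma msat_congr_of_isBisim {φ : Form P A} (hφ : φ.Modal) (hB : IsBisim M N Z)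
    {s : M.World} {s' : N.World} (hZ : Z s s') : msat M s φ ↔ msat N s' φ := by
  induction hφ generalizing s s' with
  | atom p => exact (hB s s' hZ).1 p
  | neg _ ih => simp only [msat, ih hZ]
  | and _ _ ih₁ ih₂ => simp only [msat, ih₁ hZ, ih₂ hZ]
  | box a _ ih =>
      simp only [msat]
      constructor
      · intro h t' hR'
        obtain ⟨t, hR, hZt⟩ := (hB s s' hZ).2.2 a t' hR'
        exact (ih hZt).mp (h t hR)
      · intro h t hR
        obtain ⟨t', hR', hZt⟩ := (hB s s' hZ).2.1 a t hR
        exact (ih hZt).mpr (h t' hR')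

lemma marrowOK_congr_of_isBisim {U : List (Arrow P A)} (hU : ModalArrows U)
    (hB : IsBisim M N Z) {a : A} {o o' : ℕ} {s t : M.World} {s' t' : N.World}
    (hs : Z s s') (ht : Z t t') :
    marrowOK M U a o o' s t ↔ marrowOK N U a o o' s' t' := by
  unfold marrowOK
  refine exists₂_congr fun ψ ψ' => and_congr_right fun hmem => ?_
  rw [msat_congr_of_isBisim (hU _ hmem).1 hB hs, msat_congr_of_isBisim (hU _ hmem).2 hB ht]

lemma satList_congr {U : List (Arrow P A)} {a : A} {o o' : ℕ}
    {s t : M.World} {s' t' : N.World}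
    (h : ∀ ar ∈ U, (Form.sat M s ar.2.2.1 ↔ Form.sat N s' ar.2.2.1) ∧
      (Form.sat M t ar.2.2.2.2 ↔ Form.sat N t' ar.2.2.2.2)) :
    satList M U a o o' s t ↔ satList N U a o o' s' t' := by
  induction U with
  | nil => simp only [satList]
  | cons ar rest ih =>
      obtain ⟨b, o₁, ψ, o₂, ψ'⟩ := ar
      have hhead := h _ List.mem_cons_self
      simp only [satList, hhead.1, hhead.2, ih fun ar har => h ar (List.mem_cons_of_mem _ har)]

lemma isBisim_arrowProd (hB : IsBisim M N Z)
    {okM : A → ℕ → ℕ → M.World → M.World → Prop} {okN : A → ℕ → ℕ → N.World → N.World → Prop}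
    (hok : ∀ a o o' s t s' t', Z s s' → Z t t' → (okM a o o' s t ↔ okN a o o' s' t')) :
    IsBisim (M.arrowProd okM) (N.arrowProd okN) (fun x y => Z x.1 y.1 ∧ x.2 = y.2) := by
  rintro ⟨x, n⟩ ⟨x', _⟩ ⟨hx, rfl⟩
  refine ⟨(hB x x' hx).1, ?_, ?_⟩
  · rintro b ⟨y, m⟩ ⟨hR, hOK⟩
    obtain ⟨y', hR', hy⟩ := (hB x x' hx).2.1 b y hR
    exact ⟨(y', m), ⟨hR', (hok b n m x y x' y' hx hy).mp hOK⟩, hy, rfl⟩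
  · rintro b ⟨y', m⟩ ⟨hR', hOK⟩
    obtain ⟨y, hR, hy⟩ := (hB x x' hx).2.2 b y' hR'
    exact ⟨(y, m), ⟨hR, (hok b n m x y x' y' hx hy).mpr hOK⟩, hy, rfl⟩

end Bisimulation

lemma sizeOf_cond_lt_of_mem {U : List (Arrow P A)} {ar : Arrow P A} (h : ar ∈ U) :
    sizeOf ar.2.2.1 < sizeOf U ∧ sizeOf ar.2.2.2.2 < sizeOf U := by
  have hlt := List.sizeOf_lt_of_mem h
  obtain ⟨b, o₁, ψ, o₂, ψ'⟩ := ar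
  simp only [Prod.mk.sizeOf_spec] at hlt ⊢
  omega

theorem sat_congr_of_isBisim (φ : Form P A) {M N : KModel P A}
    {Z : M.World → N.World → Prop} (hB : IsBisim M N Z) {s : M.World} {s' : N.World}
    (hZ : Z s s') : Form.sat M s φ ↔ Form.sat N s' φ := by
  match φ with
  | .atom p => simpa only [Form.sat] using (hB s s' hZ).1 p
  | .neg ψ => rw [sat_neg, sat_neg, sat_congr_of_isBisim ψ hB hZ]
  | .and ψ χ => rw [Form.sat, Form.sat, sat_congr_of_isBisim ψ hB hZ, sat_congr_of_isBisim χ hB hZ]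
  | .box b ψ =>
      rw [sat_box, sat_box]
      constructor
      · intro h t' hR'
        obtain ⟨t, hR, hZt⟩ := (hB s s' hZ).2.2 b t' hR'
        exact (sat_congr_of_isBisim ψ hB hZt).mp (h t hR)
      · intro h t hR
        obtain ⟨t', hR', hZt⟩ := (hB s s' hZ).2.1 b t hR
        exact (sat_congr_of_isBisim ψ hB hZt).mpr (h t' hR')
  | .upd U o ψ =>
      rw [sat_upd, sat_upd]
      exact sat_congr_of_isBisim ψ
        (isBisim_arrowProd (okM := satList M U) (okN := satList N U) hB
          fun _ _ _ _ _ _ _ hx hy => satList_congr fun ar har =>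
            ⟨sat_congr_of_isBisim ar.2.2.1 hB hx, sat_congr_of_isBisim ar.2.2.2.2 hB hy⟩)
        ⟨hZ, rfl⟩
  | .all ψ =>
      rw [sat_all, sat_all]
      exact forall₃_congr fun U o hU => sat_congr_of_isBisim ψ
        (isBisim_arrowProd (okM := marrowOK M U) (okN := marrowOK N U) hB
          fun _ _ _ _ _ _ _ hx hy => marrowOK_congr_of_isBisim hU hB hx hy) ⟨hZ, rfl⟩
termination_by sizeOf φ
decreasing_by
  all_goals first
    | simp only [Form.neg.sizeOf_spec, Form.and.sizeOf_spec, Form.box.sizeOf_spec,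
        Form.upd.sizeOf_spec, Form.all.sizeOf_spec]; omega
    | have := sizeOf_cond_lt_of_mem har; simp only [Form.upd.sizeOf_spec]; omega

lemma isBisim_arrowProd_cons_of_fresh (M : KModel P A) {U : List (Arrow P A)}
    {ar : Arrow P A} {o' : ℕ} (hsrc : ar.2.1 = o') (hfresh : ∀ b ∈ U, b.2.2.2.1 ≠ o') :
    IsBisim (M.arrowProd (marrowOK M (ar :: U))) (M.arrowProd (marrowOK M U))
      (fun x y => x = y ∧ x.2 ≠ o') := by
  rintro ⟨x, n⟩ _ ⟨rfl, hn⟩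
  refine ⟨fun p => Iff.rfl, ?_, ?_⟩
  · rintro b ⟨z, m⟩ ⟨hR, ψ, ψ', hmem, h₁, h₂⟩
    rcases List.mem_cons.mp hmem with rfl | hmem
    · exact absurd hsrc hn
    · exact ⟨(z, m), ⟨hR, ψ, ψ', hmem, h₁, h₂⟩, rfl, hfresh _ hmem⟩
  · rintro b ⟨z, m⟩ ⟨hR, ψ, ψ', hmem, h₁, h₂⟩
    exact ⟨(z, m), ⟨hR, ψ, ψ', List.mem_cons_of_mem _ hmem, h₁, h₂⟩, rfl, hfresh _ hmem⟩

/-- Atoms sit at the leaves of every formula, so `φ.someAtom` makes `P` inhabited and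
`Form.top` available. -/
def Form.someAtom : Form P A → P
  | .atom p => p
  | .neg φ | .and φ _ | .box _ φ | .upd _ _ φ | .all φ => φ.someAtom

lemma Form.modal_top [Inhabited P] : (Form.top : Form P A).Modal :=
  .neg (.and (.atom _) (.neg (.atom _)))

lemma msat_top [Inhabited P] (M : KModel P A) (s : M.World) : msat M s Form.top := by
  simp only [Form.top, msat]
  exact fun h => h.2 h.1

/-- the existential arbitrary arrow update quantifier commutes with
diamond: `⟨↑⟩◇_a φ ↔ ◇_a⟨↑⟩φ` is valid. -/
theorem ex_dia (P A : Type) (a : A) (φ : Form P A) :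
    ∀ (M : KModel P A) (s : M.World),
      Form.sat M s (Form.ex (Form.dia a φ)) ↔
        Form.sat M s (Form.dia a (Form.ex φ)) := by
  intro M s
  simp only [sat_ex, sat_dia]
  constructor
  · rintro ⟨U, o, hU, ⟨t, o₁⟩, ⟨hR, -⟩, hφ⟩
    exact ⟨t, hR, U, o₁, hU, hφ⟩
  · rintro ⟨t, hR, U, o, hU, hφ⟩
    have : Inhabited P := ⟨φ.someAtom⟩
    obtain ⟨o', ho'⟩ := Infinite.exists_notMem_finset (insert o (U.map (·.2.2.2.1)).toFinset)
    simp only [Finset.mem_insert, List.mem_toFinset, List.mem_map, not_or, not_exists,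
      not_and] at ho'
    have hU' : ModalArrows ((a, o', Form.top, o, Form.top) :: U) := by
      rintro ar (_ | ⟨_, har⟩)
      exacts [⟨Form.modal_top, Form.modal_top⟩, hU ar har]
    refine ⟨_, o', hU', (t, o), ⟨hR, _, _, List.mem_cons_self, msat_top M s, msat_top M t⟩, ?_⟩
    exact (sat_congr_of_isBisim φ (isBisim_arrowProd_cons_of_fresh M rfl
      ho'.2) ⟨rfl, Ne.symm ho'.1⟩).2 hφ

end AAUML
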